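/- The n-th Fishburn number (n \ge 2), defined as the coefficient of x^n in \sum_{m \ge 0} [m]_{1-x}! x^m, equals \sum_{i=0}^{n-2} (-1)^i \sum_{j=i}^{\binom{n-i}{2}} \binom{j}{i} m_{n-i,j}, where m_{n,j} are the Mahonian numbers. -/
import Mathlib


open Finset Polynomial

/-- The number of inversions of a permutation of `[n]`. -/
def invCount {n : ℕ} (π : Equiv.Perm (Fin n)) : ℕ :=
  (Finset.univ.filter fun p : Fin n × Fin n => p.1 < p.2 ∧ π p.2 < π p.1).card

/-- The Mahonian number `m_{n,j}`. -/
noncomputable def mahonian (n j : ℕ) : ℕ :=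
  Nat.card {π : Equiv.Perm (Fin n) // invCount π = j}

/-- The q-factorial `[m]_q!` as a polynomial over `ℤ`. -/
noncomputable def qFactorial (m : ℕ) : Polynomial ℤ :=
  ∏ i ∈ Finset.range m, ∑ j ∈ Finset.range (i + 1), Polynomial.X ^ j

/-- The `n`-th Fishburn number: the coefficient of `x^n` in
`∑_{m ≥ 0} [m]_{1-x}! x^m` (terms with `m > n` do not contribute to the
coefficient of `x^n`, so the sum may be truncated at `m = n`). -/
noncomputable def fishburn (n : ℕ) : ℤ :=
  (∑ m ∈ Finset.range (n + 1),
      Polynomial.aeval (1 - Polynomial.X : Polynomial ℤ) (qFactorial m) *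
        Polynomial.X ^ m).coeff n

/-! ### Auxiliary lemmas -/

lemma invCount_eq_sum {n : ℕ} (σ : Equiv.Perm (Fin n)) :
    invCount σ = ∑ a : Fin n, ∑ b : Fin n, if a < b ∧ σ b < σ a then 1 else 0 := by
  rw [invCount, Finset.card_filter, Fintype.sum_prod_type]

/-- Insertion of a new value `p` at position `0`. -/
noncomputable def insertPerm {n : ℕ} (p : Fin (n + 1)) (e : Equiv.Perm (Fin n)) :
    Equiv.Perm (Fin (n + 1)) :=
  Equiv.ofBijective (Fin.cons p (fun i => p.succAbove (e i)))
    (Finite.injective_iff_bijective.mp (by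
      intro a b hab
      induction a using Fin.cases with
      | zero =>
        induction b using Fin.cases with
        | zero => rfl
        | succ j =>
          simp only [Fin.cons_zero, Fin.cons_succ] at hab
          exact absurd hab.symm (Fin.succAbove_ne p (e j))
      | succ i =>
        induction b using Fin.cases with
        | zero =>
          simp only [Fin.cons_zero, Fin.cons_succ] at hab
          exact absurd hab (Fin.succAbove_ne p (e i))
        | succ j =>
          simp only [Fin.cons_succ] at hab
          have := (p.succAbove_right_injective) hab
          simp only [EmbeddingLike.apply_eq_iff_eq] at this
          rw [this]))

@[simp] lemma insertPerm_zero {n : ℕ} (p : Fin (n + 1)) (e : Equiv.Perm (Fin n)) :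
    insertPerm p e 0 = p := by
  simp [insertPerm, Equiv.ofBijective_apply]

@[simp] lemma insertPerm_succ {n : ℕ} (p : Fin (n + 1)) (e : Equiv.Perm (Fin n)) (i : Fin n) :
    insertPerm p e i.succ = p.succAbove (e i) := by
  simp [insertPerm, Equiv.ofBijective_apply]

lemma invCount_insertPerm {n : ℕ} (p : Fin (n + 1)) (e : Equiv.Perm (Fin n)) :
    invCount (insertPerm p e) = (p : ℕ) + invCount e := by
  rw [invCount_eq_sum, Fin.sum_univ_succ]
  congr 1
  · -- the pairs `(0, b)`
    rw [Fin.sum_univ_succ]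
    simp only [lt_self_iff_false, false_and, if_false, zero_add]
    have hiff : ∀ b : Fin n, ((0 : Fin (n+1)) < b.succ ∧ insertPerm p e b.succ < insertPerm p e 0) ↔
        ((e b : ℕ) < p) := by
      intro b
      rw [insertPerm_succ, insertPerm_zero]
      constructor
      · rintro ⟨-, h⟩
        have := (Fin.succAbove_lt_iff_castSucc_lt p (e b)).mp h
        simpa [Fin.lt_iff_val_lt_val] using this
      · intro h
        refine ⟨Fin.succ_pos _, (Fin.succAbove_lt_iff_castSucc_lt p (e b)).mpr ?_⟩
        simpa [Fin.lt_iff_val_lt_val] using h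
    calc (∑ b : Fin n, if (0 : Fin (n+1)) < b.succ ∧ insertPerm p e b.succ < insertPerm p e 0 then 1 else 0)
        = ∑ b : Fin n, if ((e b : ℕ) < p) then 1 else 0 := by
          refine Finset.sum_congr rfl fun b _ => ?_
          simp only [hiff b]
      _ = ∑ x : Fin n, if ((x : ℕ) < p) then 1 else 0 :=
          Equiv.sum_comp e (fun x : Fin n => if ((x : ℕ) < p) then (1:ℕ) else 0)
      _ = (univ.filter fun x : Fin n => (x : ℕ) < (p : ℕ)).card := by rw [Finset.card_filter]
      _ = (p : ℕ) := by
          have h : ∀ m ∈ Finset.range (p : ℕ), m < n := fun m hm =>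
            lt_of_lt_of_le (Finset.mem_range.mp hm) (Nat.lt_succ_iff.mp p.isLt)
          have : (univ.filter fun x : Fin n => (x : ℕ) < (p : ℕ)) =
              (Finset.range (p : ℕ)).attachFin h := by
            ext x; simp [Finset.mem_attachFin]
          rw [this, Finset.card_attachFin, Finset.card_range]
  · -- the pairs `(a.succ, b)`
    rw [invCount_eq_sum]
    refine Finset.sum_congr rfl fun i _ => ?_
    rw [Fin.sum_univ_succ]
    have h0 : ¬ (i.succ < (0 : Fin (n+1))) := by simp [Fin.lt_iff_val_lt_val]
    simp only [h0, false_and, if_false, zero_add]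
    refine Finset.sum_congr rfl fun j _ => ?_
    congr 1
    rw [insertPerm_succ, insertPerm_succ]
    simp [Fin.succ_lt_succ_iff, Fin.succAbove_lt_succAbove_iff]

lemma insertPerm_bijective (n : ℕ) :
    Function.Bijective (fun pe : Fin (n+1) × Equiv.Perm (Fin n) => insertPerm pe.1 pe.2) := by
  rw [Fintype.bijective_iff_injective_and_card]
  constructor
  · rintro ⟨p, e⟩ ⟨q, f⟩ h
    simp only at h
    have hp : p = q := by
      have := congrArg (fun σ : Equiv.Perm (Fin (n+1)) => σ 0) h
      simpa [insertPerm_zero] using this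
    subst hp
    have he : e = f := by
      apply Equiv.ext; intro i
      have := congrArg (fun σ : Equiv.Perm (Fin (n+1)) => σ i.succ) h
      simp only [insertPerm_succ] at this
      exact Fin.succAbove_right_injective this
    rw [he]
  · simp [Fintype.card_perm, Nat.factorial_succ]

/-- The generating function of permutations by inversions is the q-factorial. -/
lemma sum_X_pow_invCount (m : ℕ) :
    (∑ σ : Equiv.Perm (Fin m), (X : Polynomial ℤ) ^ invCount σ) = qFactorial m := by
  induction m with
  | zero =>
    rw [qFactorial, Finset.prod_range_zero]
    rw [Finset.sum_eq_single_of_mem (1 : Equiv.Perm (Fin 0)) (Finset.mem_univ _)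
      (fun b _ hb => absurd (Subsingleton.elim b 1) hb)]
    have : invCount (1 : Equiv.Perm (Fin 0)) = 0 := by
      simp [invCount]
    rw [this, pow_zero]
  | succ n ih =>
    have key : (∑ σ : Equiv.Perm (Fin (n+1)), (X : Polynomial ℤ) ^ invCount σ) =
        ∑ pe : Fin (n+1) × Equiv.Perm (Fin n),
          (X : Polynomial ℤ) ^ invCount (insertPerm pe.1 pe.2) :=
      (Function.Bijective.sum_comp (insertPerm_bijective n) _).symm
    rw [key, Fintype.sum_prod_type]
    simp only [invCount_insertPerm, pow_add]
    rw [← Finset.sum_mul_sum]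
    rw [qFactorial, Finset.prod_range_succ, ← qFactorial, ← ih]
    rw [Fin.sum_univ_eq_sum_range (fun j => (X : Polynomial ℤ) ^ j) (n+1)]
    ring

lemma card_pairs_lt (m : ℕ) :
    (univ.filter fun p : Fin m × Fin m => p.1 < p.2).card = m.choose 2 := by
  rw [Finset.card_filter, Fintype.sum_prod_type, Finset.sum_comm]
  simp only [Fin.lt_iff_val_lt_val]
  have step : ∀ b : Fin m, (∑ a : Fin m, if (a : ℕ) < (b : ℕ) then 1 else 0) = (b : ℕ) := by
    intro b
    have h : ∀ k ∈ Finset.range (b : ℕ), k < m := fun k hk =>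
      lt_of_lt_of_le (Finset.mem_range.mp hk) b.isLt.le
    have heq : (univ.filter fun a : Fin m => (a : ℕ) < (b : ℕ)) = (Finset.range (b : ℕ)).attachFin h := by
      ext x; simp [Finset.mem_attachFin]
    rw [← Finset.card_filter, heq, Finset.card_attachFin, Finset.card_range]
  rw [Finset.sum_congr rfl fun b _ => step b]
  rw [Fin.sum_univ_eq_sum_range (fun j => j) m, Nat.choose_two_right,
    ← Finset.sum_range_id_mul_two m, Nat.mul_div_cancel _ two_pos]

lemma invCount_le {m : ℕ} (σ : Equiv.Perm (Fin m)) : invCount σ ≤ m.choose 2 := by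
  rw [← card_pairs_lt m, invCount]
  apply Finset.card_le_card
  intro p hp
  simp only [Finset.mem_filter] at hp ⊢
  exact ⟨hp.1, hp.2.1⟩

lemma mahonian_eq_card (m j : ℕ) :
    mahonian m j = (univ.filter fun σ : Equiv.Perm (Fin m) => invCount σ = j).card := by
  rw [mahonian, Nat.card_eq_fintype_card, Fintype.card_subtype]

lemma sum_choose_invCount (m i : ℕ) :
    (∑ σ : Equiv.Perm (Fin m), ((invCount σ).choose i : ℤ)) =
      ∑ j ∈ Finset.Icc i (m.choose 2), (j.choose i : ℤ) * (mahonian m j : ℤ) := by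
  have h1 : (∑ σ : Equiv.Perm (Fin m), ((invCount σ).choose i : ℤ)) =
      ∑ j ∈ Finset.range (m.choose 2 + 1),
        ∑ σ ∈ univ.filter fun σ : Equiv.Perm (Fin m) => invCount σ = j,
          ((invCount σ).choose i : ℤ) := by
    rw [Finset.sum_fiberwise_of_maps_to (fun σ _ => Finset.mem_range.mpr
      (Nat.lt_succ_of_le (invCount_le σ)))]
  rw [h1]
  have h2 : ∀ j ∈ Finset.range (m.choose 2 + 1),
      (∑ σ ∈ univ.filter fun σ : Equiv.Perm (Fin m) => invCount σ = j,
        ((invCount σ).choose i : ℤ)) = (j.choose i : ℤ) * (mahonian m j : ℤ) := by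
    intro j _
    rw [Finset.sum_congr rfl (fun σ hσ => by
      rw [(Finset.mem_filter.mp hσ).2]), Finset.sum_const, mahonian_eq_card]
    simp [mul_comm]
  rw [Finset.sum_congr rfl h2]
  rw [Finset.sum_subset (fun j hj => Finset.mem_range.mpr
      (Nat.lt_succ_of_le (Finset.mem_Icc.mp hj).2))]
  intro j hj hj'
  have : j < i := by
    rcases Finset.mem_range.mp hj with h
    rcases Finset.mem_Icc.not.mp hj' with h'
    omega
  rw [Nat.choose_eq_zero_of_lt this]
  simp

lemma coeff_one_sub_X_pow (k d : ℕ) :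
    ((1 - X : Polynomial ℤ) ^ k).coeff d = (-1) ^ d * (k.choose d : ℤ) := by
  have h1 : (1 - X : Polynomial ℤ) = C (-1) * (X + C (-1)) := by
    simp only [map_neg, map_one]
    ring
  rw [h1, mul_pow, ← map_pow, Polynomial.coeff_C_mul, Polynomial.coeff_X_add_C_pow]
  rcases le_or_gt d k with h | h
  · have h2 : k + (k - d) = 2 * (k - d) + d := by omega
    have h3 : (-1 : ℤ) ^ k * (-1) ^ (k - d) = (-1) ^ d := by
      rw [← pow_add, h2, pow_add, pow_mul]
      norm_num
    calc (-1 : ℤ) ^ k * ((-1) ^ (k - d) * (k.choose d : ℤ))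
        = ((-1 : ℤ) ^ k * (-1) ^ (k - d)) * (k.choose d : ℤ) := by ring
      _ = (-1) ^ d * (k.choose d : ℤ) := by rw [h3]
  · rw [Nat.choose_eq_zero_of_lt h]
    simp

/-- For `n ≥ 2`, the `n`-th Fishburn number equals
`∑_{i=0}^{n-2} (-1)^i ∑_{j=i}^{C(n-i,2)} C(j,i) m_{n-i,j}`. -/
theorem fishburn_eq_mahonian_sum (n : ℕ) (hn : 2 ≤ n) :
    fishburn n =
      ∑ i ∈ Finset.range (n - 1), (-1 : ℤ) ^ i *
        ∑ j ∈ Finset.Icc i ((n - i).choose 2), (j.choose i : ℤ) * (mahonian (n - i) j : ℤ) := by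
  -- Step 1: compute `fishburn n` as a double sum over `m` and permutations
  have step1 : fishburn n = ∑ m ∈ Finset.range (n + 1),
      (-1 : ℤ) ^ (n - m) * ∑ σ : Equiv.Perm (Fin m), ((invCount σ).choose (n - m) : ℤ) := by
    rw [fishburn, Polynomial.finset_sum_coeff]
    refine Finset.sum_congr rfl fun m hm => ?_
    have hmn : m ≤ n := Nat.lt_succ_iff.mp (Finset.mem_range.mp hm)
    rw [Polynomial.coeff_mul_X_pow', if_pos hmn]
    rw [← sum_X_pow_invCount m, map_sum]
    rw [Polynomial.finset_sum_coeff]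
    rw [Finset.mul_sum]
    refine Finset.sum_congr rfl fun σ _ => ?_
    rw [map_pow, Polynomial.aeval_X, coeff_one_sub_X_pow]
  rw [step1]
  -- Step 2: reflect the sum, `i = n - m`
  have step2 : (∑ m ∈ Finset.range (n + 1),
      (-1 : ℤ) ^ (n - m) * ∑ σ : Equiv.Perm (Fin m), ((invCount σ).choose (n - m) : ℤ)) =
      ∑ i ∈ Finset.range (n + 1),
        (-1 : ℤ) ^ i * ∑ σ : Equiv.Perm (Fin (n - i)), ((invCount σ).choose i : ℤ) := by
    rw [← Finset.sum_range_reflect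
      (fun m => (-1 : ℤ) ^ (n - m) * ∑ σ : Equiv.Perm (Fin m), ((invCount σ).choose (n - m) : ℤ))
      (n + 1)]
    refine Finset.sum_congr rfl fun i hi => ?_
    have hi' : i ≤ n := Nat.lt_succ_iff.mp (Finset.mem_range.mp hi)
    have h1 : n + 1 - 1 - i = n - i := by omega
    have h2 : n - (n - i) = i := by omega
    rw [h1, h2]
  rw [step2]
  -- Step 3: drop the last two (vanishing) terms
  have hrw : n + 1 = (n - 1) + 1 + 1 := by omega
  rw [hrw, Finset.sum_range_succ, Finset.sum_range_succ]
  have hlast1 : ((-1 : ℤ) ^ (n - 1) *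
      ∑ σ : Equiv.Perm (Fin (n - (n - 1))), ((invCount σ).choose (n - 1) : ℤ)) = 0 := by
    have h : n - (n - 1) = 1 := by omega
    rw [h]
    have : ∀ σ : Equiv.Perm (Fin 1), invCount σ = 0 := by
      intro σ
      have h0 : invCount σ ≤ Nat.choose 1 2 := invCount_le σ
      simpa using h0
    rw [Finset.sum_congr rfl fun σ _ => by rw [this σ]]
    rw [Nat.choose_eq_zero_of_lt (by omega : 0 < n - 1)]
    simp
  have hlast2 : ((-1 : ℤ) ^ ((n - 1) + 1) *
      ∑ σ : Equiv.Perm (Fin (n - ((n - 1) + 1))), ((invCount σ).choose ((n - 1) + 1) : ℤ)) = 0 := by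
    have h : n - ((n - 1) + 1) = 0 := by omega
    rw [h]
    have : ∀ σ : Equiv.Perm (Fin 0), invCount σ = 0 := by
      intro σ; simp [invCount]
    rw [Finset.sum_congr rfl fun σ _ => by rw [this σ]]
    rw [Nat.choose_eq_zero_of_lt (by omega : 0 < (n - 1) + 1)]
    simp
  rw [hlast1, hlast2, add_zero, add_zero]
  -- Step 4: identify the inner sums with Mahonian numbers
  refine Finset.sum_congr rfl fun i _ => ?_
  rw [sum_choose_invCount]
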